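/- Let M be an oriented pseudo-Riemannian surface in ℍ₃(τ) with unit normal N (g(N,N) = ε), shape operator A, tangential projection T of E₃, angle function ν = ε g(N,E₃), and J the rotation JX = N ∧ X on TM. Then for every tangent vector field X: ∇_X T = ν(A(X) − τ JX) and X(ν) = −ε g(A(X) − τ JX, T), where ∇ is the induced Levi-Civita connection on M. -/

import Mathlib

noncomputable section

/-- Points of the Heisenberg group ℍ₃(τ), identified with ℝ³ (coordinates (x,y,z)). -/
abbrev Pt : Type := ℝ × ℝ × ℝ
/-- Tangent vectors, identified with ℝ³. -/
abbrev Vec : Type := ℝ × ℝ × ℝ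
/-- Vector fields on ℝ³. -/
abbrev VF : Type := Pt → Vec

/-- The Lorentzian metric g_τ = dx² + dy² − (dz − τ(y dx − x dy))² evaluated at `p`
on tangent vectors `U`, `V`. -/
def gH (τ : ℝ) (p : Pt) (U V : Vec) : ℝ :=
  U.1 * V.1 + U.2.1 * V.2.1
    - (U.2.2 - τ * (p.2.1 * U.1 - p.1 * U.2.1))
      * (V.2.2 - τ * (p.2.1 * V.1 - p.1 * V.2.1))

/-- E₁ = ∂x + τ y ∂z. -/
def E1 (τ : ℝ) : VF := fun p => (1, 0, τ * p.2.1)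
/-- E₂ = ∂y − τ x ∂z. -/
def E2 (τ : ℝ) : VF := fun p => (0, 1, -(τ * p.1))
/-- E₃ = ∂z. -/
def E3 : VF := fun _ => (0, 0, 1)

/-- Lie bracket of vector fields on ℝ³. -/
def bracket (X Y : VF) : VF := fun p => fderiv ℝ Y p (X p) - fderiv ℝ X p (Y p)

/-- Coefficients of a tangent vector `U` at `p` with respect to the frame E₁,E₂,E₃. -/
def coV (τ : ℝ) (p : Pt) (U : Vec) : Vec :=
  (U.1, U.2.1, U.2.2 - τ * (p.2.1 * U.1 - p.1 * U.2.1))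

/-- The Lorentzian cross product ∧ of ℍ₃(τ):
U ∧ V = (u₂v₃ − u₃v₂)E₁ − (u₁v₃ − u₃v₁)E₂ − (u₁v₂ − u₂v₁)E₃ in frame coefficients. -/
def crossP (τ : ℝ) (p : Pt) (U V : Vec) : Vec :=
  ((coV τ p U).2.1 * (coV τ p V).2.2 - (coV τ p U).2.2 * (coV τ p V).2.1) • E1 τ p
  - ((coV τ p U).1 * (coV τ p V).2.2 - (coV τ p U).2.2 * (coV τ p V).1) • E2 τ p
  - ((coV τ p U).1 * (coV τ p V).2.1 - (coV τ p U).2.1 * (coV τ p V).1) • E3 p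

/-- The Levi-Civita connection ∇^τ of g_τ, written out in the frame E₁,E₂,E₃,
using the Christoffel table ∇_{E₂}E₁ = τE₃ = −∇_{E₁}E₂, ∇_{E₃}E₁ = −τE₂ = ∇_{E₁}E₃,
∇_{E₃}E₂ = τE₁ = ∇_{E₂}E₃, ∇_{E_i}E_i = 0. -/
def nablaH (τ : ℝ) (X Y : VF) : VF := fun p =>
  (fderiv ℝ (fun q => (coV τ q (Y q)).1) p (X p)) • E1 τ p
  + (fderiv ℝ (fun q => (coV τ q (Y q)).2.1) p (X p)) • E2 τ p
  + (fderiv ℝ (fun q => (coV τ q (Y q)).2.2) p (X p)) • E3 p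
  + (τ * ((coV τ p (X p)).2.1 * (coV τ p (Y p)).2.2
        + (coV τ p (X p)).2.2 * (coV τ p (Y p)).2.1)) • E1 τ p
  - (τ * ((coV τ p (X p)).1 * (coV τ p (Y p)).2.2
        + (coV τ p (X p)).2.2 * (coV τ p (Y p)).1)) • E2 τ p
  + (τ * ((coV τ p (X p)).2.1 * (coV τ p (Y p)).1
        - (coV τ p (X p)).1 * (coV τ p (Y p)).2.1)) • E3 p

/-- The Riemann curvature tensor, R(X,Y)Z = ∇_X∇_Y Z − ∇_Y∇_X Z − ∇_{[X,Y]}Z. -/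
def Rcurv (τ : ℝ) (X Y Z : VF) : VF := fun p =>
  nablaH τ X (nablaH τ Y Z) p - nablaH τ Y (nablaH τ X Z) p
    - nablaH τ (bracket X Y) Z p

/-- The pointwise curvature tensor of ℍ₃(τ) in the algebraic form
R(X,Y)Z = 3τ²[g(Y,Z)X − g(X,Z)Y] + 4τ²[g(Y,E₃)g(Z,E₃)X − g(X,E₃)g(Z,E₃)Y
 + g(Y,Z)g(X,E₃)E₃ − g(X,Z)g(Y,E₃)E₃]. -/
def Rpt (τ : ℝ) (p : Pt) (X Y Z : Vec) : Vec :=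
  (3 * τ ^ 2) • (gH τ p Y Z • X - gH τ p X Z • Y)
  + (4 * τ ^ 2) • ((gH τ p Y (E3 p) * gH τ p Z (E3 p)) • X
    - (gH τ p X (E3 p) * gH τ p Z (E3 p)) • Y
    + (gH τ p Y Z * gH τ p X (E3 p)) • E3 p
    - (gH τ p X Z * gH τ p Y (E3 p)) • E3 p)

lemma par_comp (e n1 n2 n3 u1 u2 u3 v1 v2 v3 : ℝ) (he : e*e = 1)
    (hnn : n1*n1+n2*n2-n3*n3 = e) (hun : u1*n1+u2*n2-u3*n3 = 0)
    (hvn : v1*n1+v2*n2-v3*n3 = 0) :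
    (u2*v3-u3*v2) = e*((u2*v3-u3*v2)*n1+(u3*v1-u1*v3)*n2-(u2*v1-u1*v2)*n3)*n1 ∧
    (u3*v1-u1*v3) = e*((u2*v3-u3*v2)*n1+(u3*v1-u1*v3)*n2-(u2*v1-u1*v2)*n3)*n2 ∧
    (u2*v1-u1*v2) = e*((u2*v3-u3*v2)*n1+(u3*v1-u1*v3)*n2-(u2*v1-u1*v2)*n3)*n3 := by
  refine ⟨?_, ?_, ?_⟩
  · linear_combination (e*(n2*v3 - n3*v2))*hun + (e*(n3*u2 - n2*u3))*hvn - (e*(u2*v3-u3*v2))*hnn - (u2*v3-u3*v2)*he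
  · linear_combination (e*(n3*v1 - n1*v3))*hun + (e*(n1*u3 - n3*u1))*hvn - (e*(u3*v1-u1*v3))*hnn - (u3*v1-u1*v3)*he
  · linear_combination (e*(n2*v1 - n1*v2))*hun + (e*(n1*u2 - n2*u1))*hvn - (e*(u2*v1-u1*v2))*hnn - (u2*v1-u1*v2)*he

/-- If u, v are orthogonal to a unit (±1) vector n, then u ∧ v is parallel to n. -/
lemma cross_parallel (τ e : ℝ) (p : Pt) (n u v : Vec) (he : e*e = 1)
    (hnn : gH τ p n n = e) (hun : gH τ p u n = 0) (hvn : gH τ p v n = 0) :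
    crossP τ p u v = (e * gH τ p (crossP τ p u v) n) • n := by
  obtain ⟨h1, h2, h3⟩ := par_comp e
    (coV τ p n).1 (coV τ p n).2.1 (coV τ p n).2.2
    (coV τ p u).1 (coV τ p u).2.1 (coV τ p u).2.2
    (coV τ p v).1 (coV τ p v).2.1 (coV τ p v).2.2
    he (by simpa [gH, coV] using hnn) (by simpa [gH, coV] using hun)
    (by simpa [gH, coV] using hvn)
  simp only [coV] at h1 h2 h3
  refine Prod.ext ?_ (Prod.ext ?_ ?_)
  · simp only [crossP, coV, gH, E1, E2, E3, Prod.smul_fst, Prod.smul_snd,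
      Prod.fst_sub, Prod.snd_sub, smul_eq_mul]
    linear_combination h1
  · simp only [crossP, coV, gH, E1, E2, E3, Prod.smul_fst, Prod.smul_snd,
      Prod.fst_sub, Prod.snd_sub, smul_eq_mul]
    linear_combination h2
  · simp only [crossP, coV, gH, E1, E2, E3, Prod.smul_fst, Prod.smul_snd,
      Prod.fst_sub, Prod.snd_sub, smul_eq_mul]
    linear_combination τ * p.2.1 * h1 - τ * p.1 * h2 + h3

/-- cyclic symmetry of the triple product -/
lemma triple_cyclic (τ : ℝ) (p : Pt) (u v n : Vec) :
    gH τ p (crossP τ p u v) n = gH τ p (crossP τ p n u) v := by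
  simp only [crossP, coV, gH, E1, E2, E3, Prod.smul_fst, Prod.smul_snd,
      Prod.fst_sub, Prod.snd_sub, smul_eq_mul]
  ring

lemma triple_self (τ : ℝ) (p : Pt) (u n : Vec) :
    gH τ p (crossP τ p n u) n = 0 := by
  simp only [crossP, coV, gH, E1, E2, E3, Prod.smul_fst, Prod.smul_snd,
      Prod.fst_sub, Prod.snd_sub, smul_eq_mul]
  ring
lemma gH_add_left (τ : ℝ) (p : Pt) (U V W : Vec) :
    gH τ p (U + V) W = gH τ p U W + gH τ p V W := by
  simp only [gH, Prod.fst_add, Prod.snd_add]; ring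

lemma gH_sub_left (τ : ℝ) (p : Pt) (U V W : Vec) :
    gH τ p (U - V) W = gH τ p U W - gH τ p V W := by
  simp only [gH, Prod.fst_sub, Prod.snd_sub]; ring

lemma gH_smul_left (τ c : ℝ) (p : Pt) (U W : Vec) :
    gH τ p (c • U) W = c * gH τ p U W := by
  simp only [gH, Prod.smul_fst, Prod.smul_snd, smul_eq_mul]; ring

lemma gH_comm (τ : ℝ) (p : Pt) (U W : Vec) : gH τ p U W = gH τ p W U := by
  simp only [gH]; ring

/-- for a surface in ℍ₃(τ) with unit normal N (g(N,N)=ε), shape operator A,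
tangential part T of E₃, ν = ε g(N,E₃) and JX = N ∧ X, one has
∇_X T = ν(A(X) − τJX) and X(ν) = −ε g(A(X) − τJX, T) for every tangent field X. -/
theorem statement7 (τ ε : ℝ) (hτ : τ ≠ 0) (hε : ε = 1 ∨ ε = -1)
    (N T X AX JX nabT : VF) (ν : Pt → ℝ)
    (hXsm : ContDiff ℝ (⊤ : ℕ∞) X) (hNsm : ContDiff ℝ (⊤ : ℕ∞) N) (hνsm : ContDiff ℝ (⊤ : ℕ∞) ν)
    (hN : ∀ p, gH τ p (N p) (N p) = ε)
    (hν : ∀ p, ν p = ε * gH τ p (N p) (E3 p))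
    (hT : ∀ p, T p = E3 p - ν p • N p)
    (hXtan : ∀ p, gH τ p (X p) (N p) = 0)
    (hJX : ∀ p, JX p = crossP τ p (N p) (X p))
    (hWein : ∀ p, nablaH τ X N p = -(AX p))
    (hGaussF : ∀ p, nablaH τ X T p = nabT p + (ε * gH τ p (AX p) (T p)) • N p)
    (hnabTtan : ∀ p, gH τ p (nabT p) (N p) = 0) :
    (∀ p, nabT p = ν p • (AX p - τ • JX p)) ∧
    (∀ p, fderiv ℝ ν p (X p) = -ε * gH τ p (AX p - τ • JX p) (T p)) := by
  have he2 : ε * ε = 1 := by rcases hε with h | h <;> rw [h] <;> norm_num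
  have hTf : T = fun q => E3 q - ν q • N q := funext hT
  have hdN : Differentiable ℝ N := hNsm.differentiable (by simp)
  have hdν : Differentiable ℝ ν := hνsm.differentiable (by simp)
  have hdn1 : Differentiable ℝ (fun q : Pt => (N q).1) := hdN.fst
  have hdn2 : Differentiable ℝ (fun q : Pt => (N q).2.1) := hdN.snd.fst
  have hdn3 : Differentiable ℝ (fun q : Pt => (N q).2.2 - τ * (q.2.1 * (N q).1 - q.1 * (N q).2.1)) :=
    (hdN.snd.snd).sub ((differentiable_const τ).mul
      ((differentiable_snd.fst.mul hdN.fst).sub (differentiable_fst.mul hdN.snd.fst)))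
  have key : ∀ p : Pt,
      nabT p = ν p • (AX p - τ • crossP τ p (N p) (X p)) ∧
      fderiv ℝ ν p (X p)
        = -ε * gH τ p (AX p - τ • crossP τ p (N p) (X p)) (E3 p - ν p • N p) := by
    intro p
    -- fderiv computations
    have hd1 : fderiv ℝ (fun q : Pt => (E3 q - ν q • N q).1) p (X p)
        = -(ν p * fderiv ℝ (fun q : Pt => (N q).1) p (X p) + (N p).1 * fderiv ℝ ν p (X p)) := by
      have e : (fun q : Pt => (E3 q - ν q • N q).1) = fun q => -(ν q * (N q).1) := by
        funext q; simp [E3]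
      rw [e, fderiv_fun_neg, fderiv_fun_mul (hdν p) (hdn1 p)]
      simp
    have hd2 : fderiv ℝ (fun q : Pt => (E3 q - ν q • N q).2.1) p (X p)
        = -(ν p * fderiv ℝ (fun q : Pt => (N q).2.1) p (X p) + (N p).2.1 * fderiv ℝ ν p (X p)) := by
      have e : (fun q : Pt => (E3 q - ν q • N q).2.1) = fun q => -(ν q * (N q).2.1) := by
        funext q; simp [E3]
      rw [e, fderiv_fun_neg, fderiv_fun_mul (hdν p) (hdn2 p)]
      simp
    have hd3 : fderiv ℝ (fun q : Pt => (E3 q - ν q • N q).2.2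
          - τ * (q.2.1 * (E3 q - ν q • N q).1 - q.1 * (E3 q - ν q • N q).2.1)) p (X p)
        = -(ν p * fderiv ℝ (fun q : Pt => (N q).2.2 - τ * (q.2.1 * (N q).1 - q.1 * (N q).2.1)) p (X p)
            + ((N p).2.2 - τ * (p.2.1 * (N p).1 - p.1 * (N p).2.1)) * fderiv ℝ ν p (X p)) := by
      have e : (fun q : Pt => (E3 q - ν q • N q).2.2
          - τ * (q.2.1 * (E3 q - ν q • N q).1 - q.1 * (E3 q - ν q • N q).2.1))
          = fun q => 1 - ν q * ((N q).2.2 - τ * (q.2.1 * (N q).1 - q.1 * (N q).2.1)) := by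
        funext q; simp [E3]; ring
      rw [e, fderiv_const_sub, fderiv_fun_mul (hdν p) (hdn3 p)]
      simp
    -- metric compatibility : N has constant norm
    have hgnn : (fun q : Pt => (N q).1 * (N q).1 + (N q).2.1 * (N q).2.1
        - ((N q).2.2 - τ * (q.2.1 * (N q).1 - q.1 * (N q).2.1))
          * ((N q).2.2 - τ * (q.2.1 * (N q).1 - q.1 * (N q).2.1))) = fun _ => ε := by
      funext q; exact hN q
    have h0 : fderiv ℝ (fun q : Pt => (N q).1 * (N q).1 + (N q).2.1 * (N q).2.1
        - ((N q).2.2 - τ * (q.2.1 * (N q).1 - q.1 * (N q).2.1))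
          * ((N q).2.2 - τ * (q.2.1 * (N q).1 - q.1 * (N q).2.1))) p (X p) = 0 := by
      rw [hgnn]; simp
    rw [fderiv_fun_sub (((hdn1 p).fun_mul (hdn1 p)).fun_add ((hdn2 p).fun_mul (hdn2 p))) ((hdn3 p).fun_mul (hdn3 p)),
        fderiv_fun_add ((hdn1 p).fun_mul (hdn1 p)) ((hdn2 p).fun_mul (hdn2 p)),
        fderiv_fun_mul (hdn1 p) (hdn1 p), fderiv_fun_mul (hdn2 p) (hdn2 p), fderiv_fun_mul (hdn3 p) (hdn3 p)] at h0
    simp only [ContinuousLinearMap.coe_sub', Pi.sub_apply, ContinuousLinearMap.add_apply,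
      ContinuousLinearMap.coe_smul', Pi.smul_apply, smul_eq_mul] at h0
    have hNN : (N p).1 * fderiv ℝ (fun q : Pt => (N q).1) p (X p)
        + (N p).2.1 * fderiv ℝ (fun q : Pt => (N q).2.1) p (X p)
        - ((N p).2.2 - τ * (p.2.1 * (N p).1 - p.1 * (N p).2.1))
          * fderiv ℝ (fun q : Pt => (N q).2.2 - τ * (q.2.1 * (N q).1 - q.1 * (N q).2.1)) p (X p) = 0 := by
      linear_combination h0 / 2
    -- A(X) is tangent
    have hAXp : AX p = -(nablaH τ X N p) := by rw [hWein p, neg_neg]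
    have hAXN : gH τ p (AX p) (N p) = 0 := by
      rw [hAXp]
      simp only [nablaH, coV, gH, E1, E2, E3, Prod.smul_fst, Prod.smul_snd, Prod.fst_sub,
        Prod.snd_sub, Prod.fst_add, Prod.snd_add, Prod.fst_neg, Prod.snd_neg, smul_eq_mul]
      linear_combination -hNN
    -- the main computational identity
    have hdia : nablaH τ X (fun q => E3 q - ν q • N q) p
        = τ • crossP τ p (X p) (E3 p - ν p • N p)
          - (τ * ν p) • crossP τ p (N p) (X p)
          - fderiv ℝ ν p (X p) • N p
          - ν p • nablaH τ X N p := by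
      refine Prod.ext ?_ (Prod.ext ?_ ?_) <;>
      · simp only [nablaH, coV]
        rw [hd1, hd2, hd3]
        simp only [crossP, coV, gH, E1, E2, E3, Prod.smul_fst, Prod.smul_snd, Prod.fst_sub,
          Prod.snd_sub, Prod.fst_add, Prod.snd_add, Prod.fst_neg, Prod.snd_neg, smul_eq_mul]
        ring
    -- T - ν N is tangent
    have htanv : gH τ p (E3 p - ν p • N p) (N p) = 0 := by
      rw [gH_sub_left, gH_smul_left, hN p, gH_comm]
      linear_combination (-ε) * hν p - gH τ p (N p) (E3 p) * he2
    -- X ∧ (E3 - νN) is parallel to N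
    have hS := cross_parallel τ ε p (N p) (X p) (E3 p - ν p • N p) he2 (hN p) (hXtan p) htanv
    -- Gauss formula rewritten
    have hG : nablaH τ X (fun q => E3 q - ν q • N q) p
        = nabT p + (ε * gH τ p (AX p) (E3 p - ν p • N p)) • N p := by
      have h := hGaussF p
      simp only [hTf] at h
      exact h
    -- assemble
    have hnabT2 : nabT p
        = (τ * (ε * gH τ p (crossP τ p (X p) (E3 p - ν p • N p)) (N p))
            - fderiv ℝ ν p (X p) - ε * gH τ p (AX p) (E3 p - ν p • N p)) • N p
          + ν p • AX p - (τ * ν p) • crossP τ p (N p) (X p) := by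
      have h5 : nabT p = nablaH τ X (fun q => E3 q - ν q • N q) p
          - (ε * gH τ p (AX p) (E3 p - ν p • N p)) • N p := by
        rw [hG]; abel
      rw [h5, hdia, hWein p]
      conv_lhs => rw [hS]
      module
    have hJN : gH τ p (crossP τ p (N p) (X p)) (N p) = 0 := triple_self τ p (X p) (N p)
    have h7 := congrArg (fun W => gH τ p W (N p)) hnabT2
    simp only [gH_sub_left, gH_add_left, gH_smul_left, hN p, hnabTtan p, hAXN, hJN] at h7
    have hc0 : τ * (ε * gH τ p (crossP τ p (X p) (E3 p - ν p • N p)) (N p))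
        - fderiv ℝ ν p (X p) - ε * gH τ p (AX p) (E3 p - ν p • N p) = 0 := by
      linear_combination (-ε) * h7 - (τ * (ε * gH τ p (crossP τ p (X p) (E3 p - ν p • N p)) (N p))
        - fderiv ℝ ν p (X p) - ε * gH τ p (AX p) (E3 p - ν p • N p)) * he2
    constructor
    · rw [hnabT2, hc0]
      module
    · have hcyc := triple_cyclic τ p (X p) (E3 p - ν p • N p) (N p)
      rw [gH_sub_left, gH_smul_left]
      linear_combination (-1) * hc0 + (τ * ε) * hcyc
  constructor
  · intro p; rw [hJX p]; exact (key p).1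
  · intro p; rw [hJX p, hT p]; exact (key p).2
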